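/- arXiv:0804.4800 — 5 statements merged into one kernel-verified Lean document; each statement's English description precedes it below -/
import Mathlib

section
/- Assume SLO^F for a set F of functions containing the identity and closed under composition. If A and B are ≤_F-incomparable subsets of Baire space, then B is F-equivalent to the complement of A. Consequently anti-chains under ≤_F have size at most 2 and are of the form {A, ℝ∖A}. -/
/-- `A` is `F`-reducible to `B`. -/
def Red (F : Set ((ℕ → ℕ) → (ℕ → ℕ))) (A B : Set (ℕ → ℕ)) : Prop :=
  ∃ f ∈ F, A = f ⁻¹' B

lemma red_compl {F} {A B : Set (ℕ → ℕ)} (h : Red F A B) : Red F Aᶜ Bᶜ := by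
  obtain ⟨f, hf, rfl⟩ := h
  exact ⟨f, hf, rfl⟩

lemma red_trans {F} (hcomp : ∀ f ∈ F, ∀ g ∈ F, f ∘ g ∈ F)
    {A B C : Set (ℕ → ℕ)} (h1 : Red F A B) (h2 : Red F B C) : Red F A C := by
  obtain ⟨f, hf, rfl⟩ := h1
  obtain ⟨g, hg, rfl⟩ := h2
  exact ⟨g ∘ f, hcomp g hg f hf, rfl⟩

theorem stmt2 (F : Set ((ℕ → ℕ) → (ℕ → ℕ)))
    (hid : id ∈ F) (hcomp : ∀ f ∈ F, ∀ g ∈ F, f ∘ g ∈ F)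
    (hSLO : ∀ A B : Set (ℕ → ℕ), Red F A B ∨ Red F Bᶜ A) :
    (∀ A B : Set (ℕ → ℕ), ¬ Red F A B → ¬ Red F B A →
      Red F B Aᶜ ∧ Red F Aᶜ B) ∧
    (∀ A B C : Set (ℕ → ℕ),
      (¬ Red F A B ∧ ¬ Red F B A) →
      (¬ Red F A C ∧ ¬ Red F C A) →
      (¬ Red F B C ∧ ¬ Red F C B) → False) := by
  have key : ∀ A B : Set (ℕ → ℕ), ¬ Red F A B → ¬ Red F B A →
      Red F B Aᶜ ∧ Red F Aᶜ B := by
    intro A B hAB hBA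
    constructor
    · rcases hSLO A B with h | h
      · exact absurd h hAB
      · have := red_compl h
        simpa using this
    · rcases hSLO B A with h | h
      · exact absurd h hBA
      · exact h
  refine ⟨key, ?_⟩
  intro A B C ⟨hAB, hBA⟩ ⟨hAC, hCA⟩ ⟨hBC, hCB⟩
  have h1 := (key A B hAB hBA).1
  have h2 := (key A C hAC hCA).2
  exact hBC (red_trans hcomp h1 h2)
end

section
/- Let F be a set of functions on Baire space containing all 1-Lipschitz functions (with respect to the standard metric d(x,y) = 2^{-n} for n least with x(n) ≠ y(n)) and closed under composition, and assume SLO^F. If A ⊆ ℝ satisfies A ≰_F ℝ∖A, then the set A ⊕ ¬A is F-selfdual, i.e., A ⊕ ¬A ≤_F ℝ∖(A ⊕ ¬A), and A <_F A ⊕ ¬A and ℝ∖A <_F A ⊕ ¬A. -/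
/-!
Prepending `0` (resp. `1`) reduces `A` (resp. `Aᶜ`) to `A ⊕ Aᶜ`, and changing the parity of the
first entry is a 1-Lipschitz reduction of `A ⊕ Aᶜ` to its complement `Aᶜ ⊕ A`. If `A ⊕ Aᶜ`
reduced to `A` (resp. `Aᶜ`), composing with the reduction of `Aᶜ` (resp. `A`) to `A ⊕ Aᶜ` would
give `A ≤_F Aᶜ`.
-/

open scoped Classical

/-- Prepend `n` to the sequence `x`. -/
def consSeq (n : ℕ) (x : ℕ → ℕ) : ℕ → ℕ := fun i => if i = 0 then n else x (i - 1)

/-- The standard metric on Baire space: `d x y = (1/2)^m` where `m` is least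
with `x m ≠ y m`, and `0` if `x = y`. -/
noncomputable def bd (x y : ℕ → ℕ) : ℝ :=
  if h : x = y then 0 else (1 / 2 : ℝ) ^ (Nat.find (Function.ne_iff.mp h))

/-- `f` is Lipschitz with constant `C` with respect to `bd`. -/
def LipWith (C : ℝ) (f : (ℕ → ℕ) → ℕ → ℕ) : Prop :=
  ∀ x y, bd (f x) (f y) ≤ C * bd x y

/-- `A ⊕ B = {⟨2k⟩⌢x : x ∈ A} ∪ {⟨2k+1⟩⌢x : x ∈ B}`. -/
def oplus (A B : Set (ℕ → ℕ)) : Set (ℕ → ℕ) :=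
  {z | ∃ k x, x ∈ A ∧ z = consSeq (2 * k) x} ∪
  {z | ∃ k x, x ∈ B ∧ z = consSeq (2 * k + 1) x}

lemma bd_nonneg (x y : ℕ → ℕ) : 0 ≤ bd x y := by
  unfold bd
  split
  · exact le_rfl
  · positivity

lemma lipWith_one_of_eqOn_prefix (f : (ℕ → ℕ) → ℕ → ℕ)
    (h : ∀ x y : ℕ → ℕ, ∀ n, (∀ i < n, x i = y i) → ∀ i < n, f x i = f y i) :
    LipWith 1 f := by
  intro x y
  rw [one_mul]
  by_cases hfxy : f x = f y
  · rw [bd, dif_pos hfxy]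
    exact bd_nonneg x y
  have hxy : x ≠ y := fun h => hfxy (h ▸ rfl)
  rw [bd, bd, dif_neg hfxy, dif_neg hxy]
  apply pow_le_pow_of_le_one (by norm_num) (by norm_num)
  have hagree : ∀ i < Nat.find (Function.ne_iff.mp hxy), x i = y i := fun i hi =>
    not_not.mp (Nat.find_min (Function.ne_iff.mp hxy) hi)
  exact (Nat.le_find_iff _ _).mpr fun i hi => not_not.mpr (h x y _ hagree i hi)

@[simp] lemma consSeq_zero (n : ℕ) (x : ℕ → ℕ) : consSeq n x 0 = n := rfl

@[simp] lemma consSeq_succ (n : ℕ) (x : ℕ → ℕ) (i : ℕ) : consSeq n x (i + 1) = x i := rfl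

lemma consSeq_head_tail (z : ℕ → ℕ) : consSeq (z 0) (fun i => z (i + 1)) = z := by
  funext i
  cases i <;> rfl

lemma lipWith_one_consSeq (n : ℕ) : LipWith 1 (consSeq n) := by
  refine lipWith_one_of_eqOn_prefix _ fun x y m hagree i hi => ?_
  cases i with
  | zero => rfl
  | succ j => exact hagree j (by omega)

section Oplus

variable {A B : Set (ℕ → ℕ)}

lemma mem_oplus {z : ℕ → ℕ} :
    z ∈ oplus A B ↔
      (z 0 % 2 = 0 ∧ (fun i => z (i + 1)) ∈ A) ∨ (z 0 % 2 = 1 ∧ (fun i => z (i + 1)) ∈ B) := by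
  constructor
  · rintro (⟨k, x, hx, rfl⟩ | ⟨k, x, hx, rfl⟩)
    · exact Or.inl ⟨by simp, hx⟩
    · exact Or.inr ⟨by simp, hx⟩
  · intro h
    obtain ⟨k, hk | hk⟩ := Nat.even_or_odd' (z 0)
    · have hz : z = consSeq (2 * k) (fun i => z (i + 1)) := by rw [← hk, consSeq_head_tail]
      refine Or.inl ⟨k, _, ?_, hz⟩
      rcases h with ⟨_, hA⟩ | ⟨hodd, _⟩
      · exact hA
      · omega
    · have hz : z = consSeq (2 * k + 1) (fun i => z (i + 1)) := by rw [← hk, consSeq_head_tail]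
      refine Or.inr ⟨k, _, ?_, hz⟩
      rcases h with ⟨heven, _⟩ | ⟨_, hB⟩
      · omega
      · exact hB

lemma compl_oplus : (oplus A B)ᶜ = oplus Aᶜ Bᶜ := by
  ext z
  simp only [Set.mem_compl_iff, mem_oplus]
  rcases Nat.mod_two_eq_zero_or_one (z 0) with h | h <;> simp [h]

lemma consSeq_even_preimage_oplus (k : ℕ) : consSeq (2 * k) ⁻¹' oplus A B = A := by
  ext x
  simp [mem_oplus]

lemma consSeq_odd_preimage_oplus (k : ℕ) : consSeq (2 * k + 1) ⁻¹' oplus A B = B := by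
  ext x
  simp [mem_oplus, Nat.add_mod]

def swapParity (z : ℕ → ℕ) : ℕ → ℕ :=
  fun i => if i = 0 then (if z 0 % 2 = 0 then z 0 + 1 else z 0 - 1) else z i

lemma lipWith_one_swapParity : LipWith 1 swapParity := by
  refine lipWith_one_of_eqOn_prefix _ fun x y m hagree i hi => ?_
  cases i with
  | zero => simp [swapParity, hagree 0 hi]
  | succ j => exact hagree (j + 1) hi

lemma swapParity_preimage_oplus : swapParity ⁻¹' oplus A B = oplus B A := by
  ext z
  have htail : (fun i => swapParity z (i + 1)) = fun i => z (i + 1) := rfl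
  simp only [Set.mem_preimage, mem_oplus, htail]
  rcases Nat.mod_two_eq_zero_or_one (z 0) with h | h
  · have h' : (z 0 + 1) % 2 = 1 := by omega
    simp [swapParity, h, h']
  · have h' : (z 0 - 1) % 2 = 0 := by omega
    simp [swapParity, h, h']

end Oplus

section Reduction

variable {F : Set ((ℕ → ℕ) → (ℕ → ℕ))} {A B C : Set (ℕ → ℕ)}

lemma Red.trans (hcomp : ∀ f ∈ F, ∀ g ∈ F, f ∘ g ∈ F) (hAB : Red F A B) (hBC : Red F B C) :
    Red F A C := by
  obtain ⟨f, hf, rfl⟩ := hAB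
  obtain ⟨g, hg, rfl⟩ := hBC
  exact ⟨g ∘ f, hcomp g hg f hf, rfl⟩

lemma Red.compl (h : Red F A B) : Red F Aᶜ Bᶜ := by
  obtain ⟨f, hf, rfl⟩ := h
  exact ⟨f, hf, rfl⟩

lemma red_of_lipWith_one (hLip1 : {f | LipWith 1 f} ⊆ F) {f : (ℕ → ℕ) → ℕ → ℕ}
    (hf : LipWith 1 f) (h : A = f ⁻¹' B) : Red F A B :=
  ⟨f, hLip1 hf, h⟩

lemma red_left_oplus (hLip1 : {f | LipWith 1 f} ⊆ F) : Red F A (oplus A B) :=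
  red_of_lipWith_one hLip1 (lipWith_one_consSeq _) (consSeq_even_preimage_oplus 0).symm

lemma red_right_oplus (hLip1 : {f | LipWith 1 f} ⊆ F) : Red F B (oplus A B) :=
  red_of_lipWith_one hLip1 (lipWith_one_consSeq _) (consSeq_odd_preimage_oplus 0).symm

lemma red_oplus_compl_self_compl (hLip1 : {f | LipWith 1 f} ⊆ F) :
    Red F (oplus A Aᶜ) (oplus A Aᶜ)ᶜ := by
  refine red_of_lipWith_one hLip1 lipWith_one_swapParity ?_
  rw [compl_oplus, swapParity_preimage_oplus, compl_compl]

end Reduction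

theorem stmt3_general (F : Set ((ℕ → ℕ) → (ℕ → ℕ)))
    (hcomp : ∀ f ∈ F, ∀ g ∈ F, f ∘ g ∈ F)
    (hLip1 : {f | LipWith 1 f} ⊆ F)
    (A : Set (ℕ → ℕ)) (hA : ¬ Red F A Aᶜ) :
    Red F (oplus A Aᶜ) (oplus A Aᶜ)ᶜ ∧
    (Red F A (oplus A Aᶜ) ∧ ¬ Red F (oplus A Aᶜ) A) ∧
    (Red F Aᶜ (oplus A Aᶜ) ∧ ¬ Red F (oplus A Aᶜ) Aᶜ) := by
  have hA_oplus : Red F A (oplus A Aᶜ) := red_left_oplus hLip1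
  have hAc_oplus : Red F Aᶜ (oplus A Aᶜ) := red_right_oplus hLip1
  refine ⟨red_oplus_compl_self_compl hLip1, ⟨hA_oplus, fun h => hA ?_⟩, ⟨hAc_oplus, fun h => hA ?_⟩⟩
  · simpa using (hAc_oplus.trans hcomp h).compl
  · exact hA_oplus.trans hcomp h

theorem stmt3 (F : Set ((ℕ → ℕ) → (ℕ → ℕ)))
    (hcomp : ∀ f ∈ F, ∀ g ∈ F, f ∘ g ∈ F)
    (hLip1 : {f | LipWith 1 f} ⊆ F)
    (hSLO : ∀ A B : Set (ℕ → ℕ), Red F A B ∨ Red F Bᶜ A)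
    (A : Set (ℕ → ℕ)) (hA : ¬ Red F A Aᶜ) :
    Red F (oplus A Aᶜ) (oplus A Aᶜ)ᶜ ∧
    (Red F A (oplus A Aᶜ) ∧ ¬ Red F (oplus A Aᶜ) A) ∧
    (Red F Aᶜ (oplus A Aᶜ) ∧ ¬ Red F (oplus A Aᶜ) Aᶜ) :=
  stmt3_general F hcomp hLip1 A hA
end

section
/- Let F be a Borel-amenable set of reductions, ⟨D_n : n ∈ ω⟩ a partition of ℝ into sets of Δ_F, and A ⊆ ℝ with A ≠ ℝ. If C ⊆ ℝ satisfies A ∩ D_n ≤_F C for every n ∈ ω, then A ≤_F C. -/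
open scoped Classical

/-- The set of all Lipschitz functions (of any constant `2^k`, `k ∈ ℤ`). -/
def Lip : Set ((ℕ → ℕ) → ℕ → ℕ) := {f | ∃ k : ℤ, LipWith ((2 : ℝ) ^ k) f}

/-- The basic clopen set `N_⟨0⟩`. -/
def N0 : Set (ℕ → ℕ) := {x | x 0 = 0}

/-- The characteristic set of `F`. -/
def Delta (F : Set ((ℕ → ℕ) → (ℕ → ℕ))) : Set (Set (ℕ → ℕ)) :=
  {A | Red F A N0}

/-- `F` is a Borel-amenable set of reductions: a set of Borel functions on Baire
space, closed under composition, containing all Lipschitz functions, and closed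
under piecewise combinations along `Δ_F`-partitions. -/
def BorelAmenable (F : Set ((ℕ → ℕ) → (ℕ → ℕ))) : Prop :=
  (∀ f ∈ F, ∀ g ∈ F, f ∘ g ∈ F) ∧
  (∀ f ∈ F, Measurable f) ∧
  Lip ⊆ F ∧
  (∀ (D : ℕ → Set (ℕ → ℕ)) (fs : ℕ → (ℕ → ℕ) → ℕ → ℕ) (g : (ℕ → ℕ) → ℕ → ℕ),
    (∀ n, D n ∈ Delta F) → Pairwise (Function.onFun Disjoint D) → (⋃ n, D n) = Set.univ →
    (∀ n, fs n ∈ F) → (∀ n, ∀ x ∈ D n, g x = fs n x) → g ∈ F)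

lemma exists_index_iff_mem_of_partition {α ι : Type*} {D : ι → Set α}
    (hdisj : Pairwise (Function.onFun Disjoint D)) (hcover : (⋃ i, D i) = Set.univ) :
    ∃ idx : α → ι, ∀ i x, x ∈ D i ↔ idx x = i := by
  have hex : ∀ x, ∃ i, x ∈ D i := fun x => Set.mem_iUnion.mp (hcover ▸ Set.mem_univ x)
  choose idx hidx using hex
  refine ⟨idx, fun i x => ⟨fun hx => ?_, fun h => h ▸ hidx x⟩⟩
  by_contra hne
  exact (hdisj hne).le_bot ⟨hidx x, hx⟩

lemma BorelAmenable.exists_eqOn_partition {F : Set ((ℕ → ℕ) → (ℕ → ℕ))}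
    (hF : BorelAmenable F) {D : ℕ → Set (ℕ → ℕ)} (hD : ∀ n, D n ∈ Delta F)
    (hdisj : Pairwise (Function.onFun Disjoint D)) (hcover : (⋃ n, D n) = Set.univ)
    {fs : ℕ → (ℕ → ℕ) → ℕ → ℕ} (hfs : ∀ n, fs n ∈ F) :
    ∃ g ∈ F, ∀ n, Set.EqOn g (fs n) (D n) := by
  obtain ⟨idx, hidx⟩ := exists_index_iff_mem_of_partition hdisj hcover
  have hg : ∀ n, ∀ x ∈ D n, fs (idx x) x = fs n x := fun n x hx => by rw [(hidx n x).1 hx]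
  exact ⟨fun x => fs (idx x) x, hF.2.2.2 D fs _ hD hdisj hcover hfs hg, hg⟩

theorem stmt10_general (F : Set ((ℕ → ℕ) → (ℕ → ℕ))) (hF : BorelAmenable F)
    (D : ℕ → Set (ℕ → ℕ)) (hD : ∀ n, D n ∈ Delta F)
    (hdisj : Pairwise (Function.onFun Disjoint D)) (hcover : (⋃ n, D n) = Set.univ)
    (A C : Set (ℕ → ℕ))
    (h : ∀ n, Red F (A ∩ D n) C) :
    Red F A C := by
  choose fs hfsF hfs using h
  obtain ⟨g, hgF, hg⟩ := hF.exists_eqOn_partition hD hdisj hcover hfsF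
  refine ⟨g, hgF, Set.ext fun x => ?_⟩
  obtain ⟨n, hxn⟩ := Set.mem_iUnion.mp (hcover ▸ Set.mem_univ x)
  have hxA_iff : x ∈ A ↔ x ∈ A ∩ D n := ⟨fun hxA => ⟨hxA, hxn⟩, And.left⟩
  rw [hxA_iff, hfs n, Set.mem_preimage, Set.mem_preimage, hg n hxn]

theorem stmt10 (F : Set ((ℕ → ℕ) → (ℕ → ℕ))) (hF : BorelAmenable F)
    (D : ℕ → Set (ℕ → ℕ)) (hD : ∀ n, D n ∈ Delta F)
    (hdisj : Pairwise (Function.onFun Disjoint D)) (hcover : (⋃ n, D n) = Set.univ)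
    (A C : Set (ℕ → ℕ)) (hA : A ≠ Set.univ)
    (h : ∀ n, Red F (A ∩ D n) C) :
    Red F A C :=
  stmt10_general F hF D hD hdisj hcover A C h
end

section
/- Let D = {x ∈ ωω : ∀n ∃m > n (x(m) ≠ 0)}, and define f : ωω → ωω by: f(x) is the subsequence of x consisting of its nonzero values (i.e., f(x) = ⟨x(n) : n ∈ N_x⟩ where N_x = {n : x(n) ≠ 0}) if x ∈ D, and f(x) is the constant 0 sequence otherwise. Then for any partition ⟨C_n : n ∈ ω⟩ of ωω and any family of functions {f_n : n ∈ ω} with f restricted to C_n equal to f_n restricted to C_n for each n, there exists n₀ such that f_{n₀} is not continuous on ωω. -/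
open scoped Classical

/-- The set of sequences with infinitely many nonzero values. -/
def Dset : Set (ℕ → ℕ) := {x | ∀ n, ∃ m > n, x m ≠ 0}

/-- `f(x)` is the subsequence of nonzero values of `x` (in increasing order of
position) if `x ∈ D`, and the constant `0` sequence otherwise. -/
noncomputable def fsub : (ℕ → ℕ) → ℕ → ℕ := fun x =>
  if x ∈ Dset then fun n => x (Nat.nth (fun m => x m ≠ 0) n) else fun _ => 0

/-!
`D` is a dense `Gδ` subset of Baire space, so it is not meagre; hence it suffices that
`C n ∩ D` is nowhere dense whenever `f` agrees on it with a continuous `g`. Otherwise the closure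
of `C n ∩ D` contains a cylinder `[s]`, with `j` nonzero entries in `s`. Each point
`s⌢0^m⌢v` (`v ≠ 0`) is approximated by points of `C n ∩ D` with the same first `|s| + m + 1`
entries, on which `g = f` has `j`-th coordinate `v`. As `m → ∞` these points tend to `s⌢0^∞`, so
`g (s⌢0^∞) j = v` for every `v ≠ 0`, which is absurd.
-/

open Filter Topology PiNat Set

lemma isGδ_Dset : IsGδ Dset := by
  have : Dset = ⋂ n, ⋃ m > n, {x : ℕ → ℕ | x m ≠ 0} := by
    ext x; simp [Dset]
  rw [this]
  exact IsGδ.iInter_of_isOpen fun n => isOpen_biUnion fun m _ =>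
    isOpen_ne_fun (continuous_apply m) continuous_const

lemma dense_Dset : Dense Dset := by
  refine ((isTopologicalBasis_cylinders fun _ => ℕ).dense_iff).2 ?_
  rintro _ ⟨x, N, rfl⟩ -
  refine ⟨fun i => if i < N then x i else 1, fun i hi => if_pos hi, fun k => ⟨k + N + 1, ?_⟩⟩
  exact ⟨by omega, by simp only [if_neg (show ¬k + N + 1 < N by omega)]; exact one_ne_zero⟩

lemma fsub_count_eq {x : ℕ → ℕ} (hx : x ∈ Dset) {k : ℕ} (hk : x k ≠ 0) :
    fsub x (Nat.count (fun i => x i ≠ 0) k) = x k := by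
  rw [fsub, if_pos hx]
  exact congrArg x (Nat.nth_count hk)

lemma count_ne_zero_eq_of_mem_cylinder {x y : ℕ → ℕ} {n : ℕ} (h : y ∈ cylinder x n) :
    Nat.count (fun i => y i ≠ 0) n = Nat.count (fun i => x i ≠ 0) n := by
  simp only [Nat.count_eq_card_filter_range]
  exact congrArg _ <| Finset.filter_congr fun i hi => by rw [h i (Finset.mem_range.1 hi)]

lemma tendsto_of_mem_cylinder {E : ℕ → Type*} [∀ n, TopologicalSpace (E n)]
    {y : ℕ → ∀ n, E n} {z : ∀ n, E n} (h : ∀ m, y m ∈ cylinder z m) :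
    Tendsto y atTop (𝓝 z) :=
  tendsto_pi_nhds.2 fun i => tendsto_const_nhds.congr' <|
    (eventually_gt_atTop i).mono fun m hm => (h m i hm).symm

section

variable {g : (ℕ → ℕ) → ℕ → ℕ} {S : Set (ℕ → ℕ)}

lemma apply_count_eq_of_cylinder_subset_closure (hg : Continuous g) (hSD : S ⊆ Dset)
    (hgS : EqOn g fsub S) {z : ℕ → ℕ} {N : ℕ} (hz : ∀ i ≥ N, z i = 0)
    (hzS : cylinder z N ⊆ closure S) {v : ℕ} (hv : v ≠ 0) :
    g z (Nat.count (fun i => z i ≠ 0) N) = v := by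
  set j := Nat.count (fun i => z i ≠ 0) N
  have hw : ∀ m, Function.update z (N + m) v ∈ closure S := fun m =>
    hzS <| cylinder_anti _ (by omega) (update_mem_cylinder _ _ _)
  choose y hy hyS using fun m =>
    mem_closure_iff.1 (hw m) _ (isOpen_cylinder _ _ (N + m + 1)) (self_mem_cylinder _ _)
  have hyz : ∀ m, y m ∈ cylinder z (N + m) := fun m =>
    (mem_cylinder_iff_eq.1 (update_mem_cylinder z (N + m) v)) ▸ cylinder_anti _ (by omega) (hy m)
  have hy_val : ∀ m, y m (N + m) = v := fun m => by
    simpa using hy m (N + m) (by omega)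
  have hcount : ∀ m, Nat.count (fun i => y m i ≠ 0) (N + m) = j := fun m => by
    rw [count_ne_zero_eq_of_mem_cylinder (hyz m), Nat.count_add]
    simp [hz, j]
  have hgy : ∀ m, g (y m) j = v := fun m => by
    rw [hgS (hyS m), ← hcount m, fsub_count_eq (hSD (hyS m)) (by rw [hy_val m]; exact hv),
      hy_val m]
  have hlim : Tendsto (fun m => g (y m) j) atTop (𝓝 (g z j)) :=
    ((continuous_apply j).tendsto _).comp <|
      (hg.tendsto z).comp <| tendsto_of_mem_cylinder fun m => cylinder_anti _ (by omega) (hyz m)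
  simp only [hgy] at hlim
  exact (tendsto_nhds_unique tendsto_const_nhds hlim).symm

lemma isNowhereDense_of_eqOn_fsub (hg : Continuous g) (hSD : S ⊆ Dset) (hgS : EqOn g fsub S) :
    IsNowhereDense S := by
  rw [IsNowhereDense, eq_empty_iff_forall_notMem]
  intro x hx
  obtain ⟨_, ⟨x, N, rfl⟩, -, hxS⟩ :=
    (isTopologicalBasis_cylinders fun _ => ℕ).exists_subset_of_mem_open hx isOpen_interior
  set z : ℕ → ℕ := fun i => if i < N then x i else 0
  have hzx : cylinder z N = cylinder x N := mem_cylinder_iff_eq.1 fun i hi => if_pos hi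
  have hz : ∀ i ≥ N, z i = 0 := fun i hi => if_neg (by omega)
  have hzS : cylinder z N ⊆ closure S := hzx ▸ hxS.trans interior_subset
  have h1 := apply_count_eq_of_cylinder_subset_closure hg hSD hgS hz hzS one_ne_zero
  have h2 := apply_count_eq_of_cylinder_subset_closure hg hSD hgS hz hzS two_ne_zero
  omega

end

theorem stmt15_general (C : ℕ → Set (ℕ → ℕ)) (fs : ℕ → (ℕ → ℕ) → ℕ → ℕ)
    (hcover : (⋃ n, C n) = Set.univ)
    (hagree : ∀ n, ∀ x ∈ C n, fsub x = fs n x) :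
    ∃ n₀, ¬ Continuous (fs n₀) := by
  by_contra! hcont
  have hD : Dset ⊆ ⋃ n, C n ∩ Dset := by
    rw [← iUnion_inter, hcover, univ_inter]
  have hmeagre : IsMeagre Dset := (isMeagre_iUnion fun n =>
    (isNowhereDense_of_eqOn_fsub (hcont n) inter_subset_right
      fun x hx => (hagree n x hx.1).symm).isMeagre).mono hD
  exact not_isMeagre_of_isGδ_of_dense isGδ_Dset dense_Dset hmeagre

theorem stmt15 (C : ℕ → Set (ℕ → ℕ)) (fs : ℕ → (ℕ → ℕ) → ℕ → ℕ)
    (hdisj : Pairwise (Function.onFun Disjoint C)) (hcover : (⋃ n, C n) = Set.univ)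
    (hagree : ∀ n, ∀ x ∈ C n, fsub x = fs n x) :
    ∃ n₀, ¬ Continuous (fs n₀) :=
  stmt15_general C fs hcover hagree
end

section
/- Let B be a nonempty collection of Borel-amenable sets of reductions, and let ⋀B = ⋂B be their intersection. Then ⋀B is a Borel-amenable set of reductions, it is the infimum of B with respect to inclusion, and Δ_{⋀B} = ⋂_{F ∈ B} Δ_F. -/
open scoped Classical

/-!
Every defining property of Borel-amenability passes to intersections, except that the piecewise
rule of `⋂ B` only allows partitions into sets of `Δ_{⋂ B}`, a priori smaller than
`⋂_{F ∈ B} Δ_F`. The two are identified through the characteristic function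
`χ_A x = (if x ∈ A then 0̄ else 1̄)`: for Borel-amenable `F`, `A ∈ Δ_F` iff `χ_A ∈ F`, since
`χ_A` is the piecewise combination of two constant (hence Lipschitz) functions along `A, Aᶜ`.
-/

lemma bd_self (x : ℕ → ℕ) : bd x x = 0 := by simp [bd]

lemma bd_le_one (x y : ℕ → ℕ) : bd x y ≤ 1 := by
  unfold bd
  split
  · norm_num
  · exact pow_le_one₀ (by norm_num) (by norm_num)

lemma bd_eq_one_of_apply_zero_ne {x y : ℕ → ℕ} (h : x 0 ≠ y 0) : bd x y = 1 := by
  have hxy : x ≠ y := fun e => h (congrFun e 0)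
  rw [bd, dif_neg hxy, Nat.le_zero.mp (Nat.find_le h), pow_zero]

lemma mem_Lip_of_apply_zero {f : (ℕ → ℕ) → ℕ → ℕ} (hf : ∀ x y, x 0 = y 0 → f x = f y) :
    f ∈ Lip := by
  refine ⟨0, fun x y => ?_⟩
  rw [zpow_zero, one_mul]
  by_cases h : x 0 = y 0
  · rw [hf x y h, bd_self]
    exact bd_nonneg x y
  · rw [bd_eq_one_of_apply_zero_ne h]
    exact bd_le_one _ _

lemma const_mem_Lip (c : ℕ → ℕ) : (fun _ : ℕ → ℕ => c) ∈ Lip :=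
  mem_Lip_of_apply_zero fun _ _ _ => rfl

lemma Delta_mono {F G : Set ((ℕ → ℕ) → (ℕ → ℕ))} (h : F ⊆ G) : Delta F ⊆ Delta G :=
  fun _ ⟨f, hf, hA⟩ => ⟨f, h hf, hA⟩

namespace BorelAmenable

variable {F : Set ((ℕ → ℕ) → (ℕ → ℕ))}

lemma const_mem (hF : BorelAmenable F) (c : ℕ → ℕ) : (fun _ : ℕ → ℕ => c) ∈ F :=
  hF.2.2.1 (const_mem_Lip c)

lemma empty_mem_Delta (hF : BorelAmenable F) : (∅ : Set (ℕ → ℕ)) ∈ Delta F :=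
  ⟨fun _ _ => 1, hF.const_mem _, by ext; simp [N0]⟩

lemma compl_mem_Delta (hF : BorelAmenable F) {A : Set (ℕ → ℕ)} (hA : A ∈ Delta F) :
    Aᶜ ∈ Delta F := by
  obtain ⟨f, hf, rfl⟩ := hA
  let swap : (ℕ → ℕ) → ℕ → ℕ := fun x _ => if x 0 = 0 then 1 else 0
  have hswap : swap ∈ F := hF.2.2.1 (mem_Lip_of_apply_zero fun x y h => by simp only [swap, h])
  refine ⟨swap ∘ f, hF.1 _ hswap _ hf, ?_⟩
  ext x
  by_cases h : f x 0 = 0 <;> simp [swap, N0, h]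

/-- The piecewise rule along the partition `A, Aᶜ, ∅, ∅, …`. -/
lemma ite_mem (hF : BorelAmenable F) {A : Set (ℕ → ℕ)} (hA : A ∈ Delta F)
    {f g : (ℕ → ℕ) → ℕ → ℕ} (hf : f ∈ F) (hg : g ∈ F) :
    (fun x => if x ∈ A then f x else g x) ∈ F := by
  refine hF.2.2.2 (fun n => if n = 0 then A else if n = 1 then Aᶜ else ∅)
    (fun n => if n = 0 then f else g) _ ?_ ?_ ?_ ?_ ?_
  · rintro (_ | _ | n)
    · simpa using hA
    · simpa using hF.compl_mem_Delta hA
    · simpa using hF.empty_mem_Delta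
  · intro m n hmn
    rcases m with _ | _ | m <;> rcases n with _ | _ | n <;>
      simp_all [Function.onFun, Set.disjoint_left]
  · refine Set.eq_univ_of_forall fun x => Set.mem_iUnion.mpr ?_
    by_cases hx : x ∈ A
    · exact ⟨0, by simpa using hx⟩
    · exact ⟨1, by simpa using hx⟩
  · rintro (_ | n)
    · simpa using hf
    · simpa using hg
  · rintro (_ | _ | n) x hx <;> simp_all

end BorelAmenable

noncomputable def charFun (A : Set (ℕ → ℕ)) : (ℕ → ℕ) → ℕ → ℕ :=
  fun x => if x ∈ A then fun _ => 0 else fun _ => 1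

lemma charFun_preimage_N0 (A : Set (ℕ → ℕ)) : charFun A ⁻¹' N0 = A := by
  ext x
  by_cases hx : x ∈ A <;> simp [charFun, N0, hx]

lemma BorelAmenable.mem_Delta_iff_charFun_mem {F : Set ((ℕ → ℕ) → (ℕ → ℕ))}
    (hF : BorelAmenable F) {A : Set (ℕ → ℕ)} : A ∈ Delta F ↔ charFun A ∈ F :=
  ⟨fun hA => hF.ite_mem hA (hF.const_mem fun _ => 0) (hF.const_mem fun _ => 1),
    fun h => ⟨charFun A, h, (charFun_preimage_N0 A).symm⟩⟩

lemma BorelAmenable.sInter {B : Set (Set ((ℕ → ℕ) → (ℕ → ℕ)))} (hne : B.Nonempty)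
    (hB : ∀ F ∈ B, BorelAmenable F) : BorelAmenable (⋂₀ B) := by
  obtain ⟨F₀, hF₀⟩ := hne
  refine ⟨fun f hf g hg F hF => (hB F hF).1 f (hf F hF) g (hg F hF),
    fun f hf => (hB F₀ hF₀).2.1 f (hf F₀ hF₀), fun f hf F hF => (hB F hF).2.2.1 hf, ?_⟩
  intro D fs g hD hdisj hcover hfs hg F hF
  exact (hB F hF).2.2.2 D fs g (fun n => Delta_mono (Set.sInter_subset_of_mem hF) (hD n))
    hdisj hcover (fun n => hfs n F hF) hg

theorem stmt19 (B : Set (Set ((ℕ → ℕ) → (ℕ → ℕ)))) (hne : B.Nonempty)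
    (hB : ∀ F ∈ B, BorelAmenable F) :
    BorelAmenable (⋂₀ B) ∧
    (∀ F ∈ B, ⋂₀ B ⊆ F) ∧
    (∀ G : Set ((ℕ → ℕ) → (ℕ → ℕ)), (∀ F ∈ B, G ⊆ F) → G ⊆ ⋂₀ B) ∧
    Delta (⋂₀ B) = ⋂ F ∈ B, Delta F := by
  have hInter := BorelAmenable.sInter hne hB
  refine ⟨hInter, fun F hF => Set.sInter_subset_of_mem hF, fun G hG => Set.subset_sInter hG, ?_⟩
  ext A
  simp only [Set.mem_iInter, hInter.mem_Delta_iff_charFun_mem, Set.mem_sInter]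
  exact forall₂_congr fun F hF => (hB F hF).mem_Delta_iff_charFun_mem.symm
end
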